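/- arXiv:nlin/0103042 — 2 statements merged into one kernel-verified Lean document; each statement's English description precedes it below -/
import Mathlib

section
/- Let v : ℝ³ × ℝ → ℝ³ and p : ℝ³ × ℝ → ℝ satisfy the incompressible Euler equations ∂v/∂t + Dv·v = −grad p everywhere, with v continuously differentiable. Let k : ℝ³ × ℝ → ℝ be twice continuously differentiable and define the impulse density z := v + grad k. Then z satisfies ∂z/∂t(x,t) − v(x,t) × curl z(x,t) = grad Λ(x,t) for all (x,t), where the gauge Λ is given by Λ = ∂k/∂t − p − ½ v·v. -/
/-!
Since the curl of a gradient vanishes, `v × curl z = v × curl v = (Dv)ᵀ v - (Dv) v`, and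
`(Dv)ᵀ v = grad (½ v·v)`. By symmetry of second derivatives `∂ₜ grad k = grad ∂ₜk`, so
`∂ₜz - v × curl z = ∂ₜv + (Dv) v + grad ∂ₜk - grad (½ v·v)`, and the Euler equation replaces
`∂ₜv + (Dv) v` by `-grad p`.
-/

open Matrix

/-- The Jacobian matrix of a vector field `u : ℝ³ → ℝ³` at `x`:
`(jacAt u x) i j = ∂uᵢ/∂xⱼ (x)`. -/
noncomputable def jacAt (u : (Fin 3 → ℝ) → (Fin 3 → ℝ)) (x : Fin 3 → ℝ) :
    Matrix (Fin 3) (Fin 3) ℝ :=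
  fun i j => fderiv ℝ u x (Pi.single j 1) i

/-- The gradient of a scalar function `f : ℝ³ → ℝ` at `x`. -/
noncomputable def gradAt (f : (Fin 3 → ℝ) → ℝ) (x : Fin 3 → ℝ) : Fin 3 → ℝ :=
  fun i => fderiv ℝ f x (Pi.single i 1)

/-- The curl of a vector field `u : ℝ³ → ℝ³` at `x`. -/
noncomputable def curlAt (u : (Fin 3 → ℝ) → (Fin 3 → ℝ)) (x : Fin 3 → ℝ) : Fin 3 → ℝ :=
  ![jacAt u x 2 1 - jacAt u x 1 2,
    jacAt u x 0 2 - jacAt u x 2 0,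
    jacAt u x 1 0 - jacAt u x 0 1]

/-- The divergence of a vector field `u : ℝ³ → ℝ³` at `x`. -/
noncomputable def divAt (u : (Fin 3 → ℝ) → (Fin 3 → ℝ)) (x : Fin 3 → ℝ) : ℝ :=
  ∑ i, jacAt u x i i

section VectorCalculus

variable {u w : (Fin 3 → ℝ) → (Fin 3 → ℝ)} {f g : (Fin 3 → ℝ) → ℝ} {x : Fin 3 → ℝ}

lemma jacAt_add (hu : DifferentiableAt ℝ u x) (hw : DifferentiableAt ℝ w x) :
    jacAt (fun y => u y + w y) x = jacAt u x + jacAt w x := by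
  ext i j
  simp [jacAt, fderiv_fun_add hu hw]

lemma curlAt_add (hu : DifferentiableAt ℝ u x) (hw : DifferentiableAt ℝ w x) :
    curlAt (fun y => u y + w y) x = curlAt u x + curlAt w x := by
  ext i
  fin_cases i <;>
    simp only [curlAt, jacAt_add hu hw, Matrix.add_apply, Pi.add_apply, Fin.zero_eta, Fin.mk_one,
      Fin.reduceFinMk, cons_val_zero, cons_val_one, cons_val] <;>
    ring

lemma hasFDerivAt_gradAt (hf : DifferentiableAt ℝ (fderiv ℝ f) x) :
    HasFDerivAt (gradAt f)
      (ContinuousLinearMap.pi fun i =>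
        (ContinuousLinearMap.apply ℝ ℝ (Pi.single i 1)).comp (fderiv ℝ (fderiv ℝ f) x)) x :=
  hasFDerivAt_pi.2 fun _ =>
    (ContinuousLinearMap.apply ℝ ℝ _).hasFDerivAt.comp (f := fderiv ℝ f) x hf.hasFDerivAt

lemma jacAt_gradAt (hf : DifferentiableAt ℝ (fderiv ℝ f) x) (i j : Fin 3) :
    jacAt (gradAt f) x i j = fderiv ℝ (fderiv ℝ f) x (Pi.single j 1) (Pi.single i 1) := by
  simp [jacAt, (hasFDerivAt_gradAt hf).fderiv]

lemma curlAt_gradAt (hf : ContDiffAt ℝ 2 f x) : curlAt (gradAt f) x = 0 := by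
  have hdiff : DifferentiableAt ℝ (fderiv ℝ f) x :=
    (hf.fderiv_right (m := 1) le_rfl).differentiableAt one_ne_zero
  have hsymm : IsSymmSndFDerivAt ℝ f x := hf.isSymmSndFDerivAt (by simp)
  have hJ : ∀ i j, jacAt (gradAt f) x i j = jacAt (gradAt f) x j i := fun i j => by
    simp only [jacAt_gradAt hdiff, hsymm.eq (Pi.single i 1)]
  ext i
  fin_cases i <;> simp [curlAt, hJ 2 1, hJ 0 2, hJ 1 0]

lemma curlAt_add_gradAt (hu : DifferentiableAt ℝ u x) (hf : ContDiffAt ℝ 2 f x) :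
    curlAt (fun y => u y + gradAt f y) x = curlAt u x := by
  have hdiff : DifferentiableAt ℝ (fderiv ℝ f) x :=
    (hf.fderiv_right (m := 1) le_rfl).differentiableAt one_ne_zero
  rw [curlAt_add hu (hasFDerivAt_gradAt hdiff).differentiableAt, curlAt_gradAt hf, add_zero]

lemma cross_curlAt (a : Fin 3 → ℝ) :
    a ⨯₃ curlAt u x = (jacAt u x)ᵀ *ᵥ a - jacAt u x *ᵥ a := by
  ext i
  fin_cases i <;>
    simp only [curlAt, cross_apply, mulVec, dotProduct, transpose_apply, Fin.sum_univ_three,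
      Pi.sub_apply, Fin.zero_eta, Fin.mk_one, Fin.reduceFinMk, cons_val_zero, cons_val_one,
      cons_val] <;>
    ring

lemma gradAt_sub (hf : DifferentiableAt ℝ f x) (hg : DifferentiableAt ℝ g x) :
    gradAt (fun y => f y - g y) x = gradAt f x - gradAt g x := by
  ext i
  simp [gradAt, fderiv_fun_sub hf hg]

lemma gradAt_half_dotProduct_self (hu : DifferentiableAt ℝ u x) :
    gradAt (fun y => (1 / 2) * (u y ⬝ᵥ u y)) x = (jacAt u x)ᵀ *ᵥ u x := by
  have hcomp := hasFDerivAt_pi'.1 hu.hasFDerivAt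
  have hsq := (HasFDerivAt.fun_sum (u := Finset.univ) fun j _ =>
    (hcomp j).fun_mul (hcomp j)).const_mul (1 / 2 : ℝ)
  ext i
  simp only [gradAt, dotProduct]
  rw [hsq.fderiv]
  simp only [_root_.smul_apply, _root_.sum_apply, _root_.add_apply,
    ContinuousLinearMap.comp_apply, ContinuousLinearMap.proj_apply, smul_eq_mul, Finset.mul_sum,
    mulVec, dotProduct, transpose_apply, jacAt]
  exact Finset.sum_congr rfl fun j _ => by ring

end VectorCalculus

section SpaceTime

open ContinuousLinearMap

variable {E G : Type*} [NormedAddCommGroup E] [NormedSpace ℝ E]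
  [NormedAddCommGroup G] [NormedSpace ℝ G] {f : E × ℝ → G} {k : E × ℝ → ℝ} {x : E} {t : ℝ}

lemma HasFDerivAt.comp_prodMk_left {L : E × ℝ →L[ℝ] G} (hf : HasFDerivAt f L (x, t)) :
    HasFDerivAt (fun y => f (y, t)) (L.comp (inl ℝ E ℝ)) x :=
  hf.comp x (hasFDerivAt_prodMk_left x t)

lemma HasFDerivAt.comp_prodMk_right {L : E × ℝ →L[ℝ] G} (hf : HasFDerivAt f L (x, t)) :
    HasDerivAt (fun s => f (x, s)) (L (0, 1)) t :=
  hf.comp_hasDerivAt t ((hasDerivAt_const t x).prodMk (hasDerivAt_id t))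

lemma hasFDerivAt_deriv_snd (hk : ContDiff ℝ 2 k) :
    HasFDerivAt (fun y => deriv (fun s => k (y, s)) t)
      ((apply ℝ ℝ ((0 : E), (1 : ℝ))).comp ((fderiv ℝ (fderiv ℝ k) (x, t)).comp (inl ℝ E ℝ)))
      x := by
  have hF : Differentiable ℝ (fderiv ℝ k) :=
    (hk.fderiv_right (m := 1) le_rfl).differentiable one_ne_zero
  have hsection : (fun y => deriv (fun s => k (y, s)) t) = fun y => fderiv ℝ k (y, t) (0, 1) :=
    funext fun y => ((hk.differentiable two_ne_zero _).hasFDerivAt.comp_prodMk_right).deriv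
  rw [hsection]
  exact (apply ℝ ℝ _).hasFDerivAt.comp x (hF (x, t)).hasFDerivAt.comp_prodMk_left

lemma hasDerivAt_fderiv_fst (hk : ContDiff ℝ 2 k) :
    HasDerivAt (fun s => fderiv ℝ (fun y => k (y, s)) x)
      (fderiv ℝ (fun y => deriv (fun s => k (y, s)) t) x) t := by
  have hF : Differentiable ℝ (fderiv ℝ k) :=
    (hk.fderiv_right (m := 1) le_rfl).differentiable one_ne_zero
  have hsection : (fun s => fderiv ℝ (fun y => k (y, s)) x) =
      fun s => (fderiv ℝ k (x, s)).comp (inl ℝ E ℝ) :=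
    funext fun s => ((hk.differentiable two_ne_zero _).hasFDerivAt.comp_prodMk_left).fderiv
  have hsymm : IsSymmSndFDerivAt ℝ k (x, t) := hk.contDiffAt.isSymmSndFDerivAt (by simp)
  rw [hsection, (hasFDerivAt_deriv_snd hk).fderiv]
  convert (hF (x, t)).hasFDerivAt.comp_prodMk_right.clm_comp (hasDerivAt_const t (inl ℝ E ℝ))
    using 1
  ext h
  simp [hsymm.eq (0, 1)]

end SpaceTime

lemma hasDerivAt_gradAt_fst {k : (Fin 3 → ℝ) × ℝ → ℝ} (hk : ContDiff ℝ 2 k)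
    (x : Fin 3 → ℝ) (t : ℝ) :
    HasDerivAt (fun s => gradAt (fun y => k (y, s)) x)
      (gradAt (fun y => deriv (fun s => k (y, s)) t) x) t :=
  hasDerivAt_pi.2 fun i =>
    (ContinuousLinearMap.apply ℝ ℝ (Pi.single i 1 : Fin 3 → ℝ)).hasFDerivAt.comp_hasDerivAt t
      (hasDerivAt_fderiv_fst hk)

/-- If `v, p` satisfy the incompressible Euler equations
`∂v/∂t + Dv·v = −grad p`, then the impulse density `z = v + grad k` satisfies
`∂z/∂t − v × curl z = grad Λ` with gauge `Λ = ∂k/∂t − p − ½ v·v`. -/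
theorem euler_implies_impulse_gauge
    (v : (Fin 3 → ℝ) × ℝ → (Fin 3 → ℝ)) (p : (Fin 3 → ℝ) × ℝ → ℝ)
    (hv : ContDiff ℝ 1 v)
    (hp : ∀ (x : Fin 3 → ℝ) (t : ℝ), DifferentiableAt ℝ (fun y => p (y, t)) x)
    (heuler : ∀ (x : Fin 3 → ℝ) (t : ℝ),
      deriv (fun s => v (x, s)) t + jacAt (fun y => v (y, t)) x *ᵥ v (x, t)
        = -gradAt (fun y => p (y, t)) x)
    (k : (Fin 3 → ℝ) × ℝ → ℝ) (hk : ContDiff ℝ 2 k)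
    (z : (Fin 3 → ℝ) × ℝ → (Fin 3 → ℝ))
    (hz : ∀ (x : Fin 3 → ℝ) (t : ℝ),
      z (x, t) = v (x, t) + gradAt (fun y => k (y, t)) x)
    (Λ : (Fin 3 → ℝ) × ℝ → ℝ)
    (hΛ : ∀ (x : Fin 3 → ℝ) (t : ℝ),
      Λ (x, t) = deriv (fun s => k (x, s)) t - p (x, t)
        - (1 / 2) * (v (x, t) ⬝ᵥ v (x, t))) :
    ∀ (x : Fin 3 → ℝ) (t : ℝ),
      deriv (fun s => z (x, s)) t - v (x, t) ⨯₃ curlAt (fun y => z (y, t)) x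
        = gradAt (fun y => Λ (y, t)) x := by
  intro x t
  have hv_diff : Differentiable ℝ v := hv.differentiable one_ne_zero
  have hv_space : DifferentiableAt ℝ (fun y => v (y, t)) x :=
    (hv_diff (x, t)).hasFDerivAt.comp_prodMk_left.differentiableAt
  have hk_space : ContDiff ℝ 2 (fun y => k (y, t)) := hk.comp (contDiff_prodMk_left t)
  have hz_time : HasDerivAt (fun s => z (x, s))
      (deriv (fun s => v (x, s)) t + gradAt (fun y => deriv (fun s => k (y, s)) t) x) t := by
    simp only [hz]
    exact (hv_diff (x, t)).hasFDerivAt.comp_prodMk_right.differentiableAt.hasDerivAt.add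
      (hasDerivAt_gradAt_fst hk x t)
  have hcurl : curlAt (fun y => z (y, t)) x = curlAt (fun y => v (y, t)) x := by
    simp only [hz]
    exact curlAt_add_gradAt hv_space hk_space.contDiffAt
  have hkt_space : DifferentiableAt ℝ (fun y => deriv (fun s => k (y, s)) t) x :=
    (hasFDerivAt_deriv_snd hk).differentiableAt
  have hkinetic : DifferentiableAt ℝ (fun y => (1 / 2) * (v (y, t) ⬝ᵥ v (y, t))) x := by
    simp only [dotProduct]
    fun_prop
  have hgrad : gradAt (fun y => Λ (y, t)) x = gradAt (fun y => deriv (fun s => k (y, s)) t) x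
      - gradAt (fun y => p (y, t)) x - (jacAt (fun y => v (y, t)) x)ᵀ *ᵥ v (x, t) := by
    simp only [hΛ]
    rw [gradAt_sub (hkt_space.fun_sub (hp x t)) hkinetic, gradAt_sub hkt_space (hp x t),
      gradAt_half_dotProduct_self hv_space]
  rw [hz_time.deriv, hcurl, cross_curlAt, hgrad]
  linear_combination heuler x t
end

section
/- Let v : ℝ³ × ℝ → ℝ³ be continuously differentiable in the spatial variable, and let φ, π : ℝ³ × ℝ → ℝ³ be differentiable and satisfy the extremal equations ∂φ/∂t(X,t) = v(φ(X,t), t) and ∂π/∂t(X,t) = −(Dv(φ(X,t), t))ᵀ π(X,t) for all (X,t). Suppose z : ℝ³ × ℝ → ℝ³ is differentiable (in space and time), satisfies z(φ(X,t), t) = π(X,t) for all (X,t) (i.e. z = π ∘ φ⁻¹), and φ(·,t) : ℝ³ → ℝ³ is surjective for every t. Then z satisfies the impulse equation ∂z/∂t(x,t) + Dz(x,t) v(x,t) + (Dv(x,t))ᵀ z(x,t) = 0 for all (x,t). -/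
open Matrix

/-! Differentiating the identity `z (φ (X, t), t) = π (X, t)` in `t` by the chain rule gives
`∂z/∂t + Dz·v = ∂π/∂t = −(Dv)ᵀ z` at the point `φ (X, t)`, and surjectivity of `φ (·, t)`
makes every point of this form. -/

lemma jacAt_eq_toMatrix' (u : (Fin 3 → ℝ) → (Fin 3 → ℝ)) (x : Fin 3 → ℝ) :
    jacAt u x = LinearMap.toMatrix' (fderiv ℝ u x : (Fin 3 → ℝ) →ₗ[ℝ] Fin 3 → ℝ) :=
  rfl

lemma jacAt_mulVec (u : (Fin 3 → ℝ) → (Fin 3 → ℝ)) (x a : Fin 3 → ℝ) :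
    jacAt u x *ᵥ a = fderiv ℝ u x a := by
  rw [jacAt_eq_toMatrix', LinearMap.toMatrix'_mulVec]
  rfl

section MaterialDerivative

variable {E F : Type*} [NormedAddCommGroup E] [NormedSpace ℝ E]
  [NormedAddCommGroup F] [NormedSpace ℝ F]

theorem DifferentiableAt.hasDerivAt_comp_prodMk {f : E × ℝ → F} {γ : ℝ → E} {w : E} {t : ℝ}
    (hf : DifferentiableAt ℝ f (γ t, t)) (hγ : HasDerivAt γ w t) :
    HasDerivAt (fun s => f (γ s, s))
      (deriv (fun s => f (γ t, s)) t + fderiv ℝ (fun y => f (y, t)) (γ t) w) t := by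
  have hf' := hf.hasFDerivAt
  have hspace : HasFDerivAt (fun y => f (y, t))
      ((fderiv ℝ f (γ t, t)).comp (.inl ℝ E ℝ)) (γ t) :=
    hf'.comp (γ t) (hasFDerivAt_prodMk_left (γ t) t)
  have htime : HasDerivAt (fun s => f (γ t, s)) (fderiv ℝ f (γ t, t) (0, 1)) t :=
    hf'.comp_hasDerivAt t ((hasDerivAt_const t (γ t)).prodMk (hasDerivAt_id t))
  rw [hspace.fderiv, htime.deriv, ContinuousLinearMap.comp_apply, ContinuousLinearMap.inl_apply,
    ← map_add, Prod.mk_add_mk, add_zero, zero_add]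
  exact HasFDerivAt.comp_hasDerivAt (f := fun s => (γ s, s)) t hf'
    (hγ.prodMk (hasDerivAt_id t))

end MaterialDerivative

theorem extremal_implies_impulse_general
    (v : (Fin 3 → ℝ) × ℝ → (Fin 3 → ℝ))
    (φ π : (Fin 3 → ℝ) × ℝ → (Fin 3 → ℝ))
    (hφ : Differentiable ℝ φ)
    (hφeq : ∀ (X : Fin 3 → ℝ) (t : ℝ),
      deriv (fun s => φ (X, s)) t = v (φ (X, t), t))
    (hπeq : ∀ (X : Fin 3 → ℝ) (t : ℝ),
      deriv (fun s => π (X, s)) t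
        = -((jacAt (fun y => v (y, t)) (φ (X, t)))ᵀ *ᵥ π (X, t)))
    (z : (Fin 3 → ℝ) × ℝ → (Fin 3 → ℝ)) (hz : Differentiable ℝ z)
    (hzπ : ∀ (X : Fin 3 → ℝ) (t : ℝ), z (φ (X, t), t) = π (X, t))
    (hsurj : ∀ t : ℝ, Function.Surjective (fun X => φ (X, t))) :
    ∀ (x : Fin 3 → ℝ) (t : ℝ),
      deriv (fun s => z (x, s)) t
        + jacAt (fun y => z (y, t)) x *ᵥ v (x, t)
        + (jacAt (fun y => v (y, t)) x)ᵀ *ᵥ z (x, t) = 0 := by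
  intro x t
  obtain ⟨X, rfl⟩ := hsurj t x
  have hflow : HasDerivAt (fun s => φ (X, s)) (v (φ (X, t), t)) t := by
    rw [← hφeq]
    exact ((hφ _).comp t
      ((hasDerivAt_const t X).prodMk (hasDerivAt_id t)).differentiableAt).hasDerivAt
  have hmaterial := ((hz _).hasDerivAt_comp_prodMk hflow).deriv
  simp only [hzπ, hπeq] at hmaterial
  rw [jacAt_mulVec, ← hmaterial, hzπ, neg_add_cancel]

/-- If `(φ, π)` solve the extremal equations `∂φ/∂t = v ∘ φ`,
`∂π/∂t = −(Dv ∘ φ)ᵀ π`, and `z = π ∘ φ⁻¹` (i.e. `z(φ(X,t),t) = π(X,t)` with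
`φ(·,t)` surjective), then the Eulerian impulse density `z` satisfies
`∂z/∂t + Dz·v + (Dv)ᵀ·z = 0`. -/
theorem extremal_implies_impulse
    (v : (Fin 3 → ℝ) × ℝ → (Fin 3 → ℝ))
    (hv : ∀ t : ℝ, ContDiff ℝ 1 (fun x => v (x, t)))
    (φ π : (Fin 3 → ℝ) × ℝ → (Fin 3 → ℝ))
    (hφ : Differentiable ℝ φ) (hπ : Differentiable ℝ π)
    (hφeq : ∀ (X : Fin 3 → ℝ) (t : ℝ),
      deriv (fun s => φ (X, s)) t = v (φ (X, t), t))
    (hπeq : ∀ (X : Fin 3 → ℝ) (t : ℝ),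
      deriv (fun s => π (X, s)) t
        = -((jacAt (fun y => v (y, t)) (φ (X, t)))ᵀ *ᵥ π (X, t)))
    (z : (Fin 3 → ℝ) × ℝ → (Fin 3 → ℝ)) (hz : Differentiable ℝ z)
    (hzπ : ∀ (X : Fin 3 → ℝ) (t : ℝ), z (φ (X, t), t) = π (X, t))
    (hsurj : ∀ t : ℝ, Function.Surjective (fun X => φ (X, t))) :
    ∀ (x : Fin 3 → ℝ) (t : ℝ),
      deriv (fun s => z (x, s)) t
        + jacAt (fun y => z (y, t)) x *ᵥ v (x, t)
        + (jacAt (fun y => v (y, t)) x)ᵀ *ᵥ z (x, t) = 0 :=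
  extremal_implies_impulse_general v φ π hφ hφeq hπeq z hz hzπ hsurj
end
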